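/- arXiv:2403.08800 — 4 statements merged into one kernel-verified Lean document; each statement's English description precedes it below -/
import Mathlib

section
/- Let G_kk, G_mm, G_km, B_km be real numbers with G_kk > 0, G_mm > 0, G_km < 0 and |G_km| ≤ min(G_kk, G_mm). Let v_k, v_m, c, s be real numbers with v_k ≥ 0, v_m ≥ 0 satisfying the Jabr inequality c² + s² ≤ v_k·v_m, and define the linearized active power flows P_km := G_kk·v_k + G_km·c + B_km·s and P_mk := G_mm·v_m + G_km·c − B_km·s. Then the active power loss is nonnegative: P_km + P_mk ≥ 0. -/
/-- for a transmission line with `G_kk > 0`, `G_mm > 0`, `G_km < 0`,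
`|G_km| ≤ min(G_kk, G_mm)`, the Jabr inequality implies nonnegative active power loss:
`P_km + P_mk ≥ 0` for the linearized power flows. -/
theorem jabr_implies_nonneg_loss (Gkk Gmm Gkm Bkm : ℝ)
    (hGkk : 0 < Gkk) (hGmm : 0 < Gmm) (hGkm : Gkm < 0) (habs : |Gkm| ≤ min Gkk Gmm)
    (vk vm c s : ℝ) (hvk : 0 ≤ vk) (hvm : 0 ≤ vm)
    (hjabr : c ^ 2 + s ^ 2 ≤ vk * vm) :
    (Gkk * vk + Gkm * c + Bkm * s) + (Gmm * vm + Gkm * c - Bkm * s) ≥ 0 := by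
  have h1 : -Gkm ≤ Gkk := by
    have := le_trans (neg_abs_le Gkm) (le_refl _)
    have h := habs
    rw [abs_of_neg hGkm] at h
    linarith [le_min_iff.mp h |>.1]
  have h2 : -Gkm ≤ Gmm := by
    have h := habs
    rw [abs_of_neg hGkm] at h
    linarith [le_min_iff.mp h |>.2]
  rcases le_or_gt c 0 with hc | hc
  · nlinarith [mul_nonneg hvk hvm, mul_nonneg hvk hGmm.le, mul_nonneg hvm hGkk.le]
  · have hsum : 2 * c ≤ vk + vm := by
      nlinarith [sq_nonneg (vk - vm), sq_nonneg s, sq_nonneg (vk + vm - 2*c)]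
    nlinarith [mul_nonneg (by linarith : (0:ℝ) ≤ -Gkm) (by linarith : 0 ≤ vk + vm - 2*c)]
end

section
/- Let C := {(x, y, w, z) ∈ ℝ² × ℝ²₊ : x² + y² ≤ w·z} and let (x̄, ȳ, w̄, z̄) ∈ ℝ⁴ with w̄ ≥ 0, z̄ ≥ 0, w̄ + z̄ > 0 and x̄² + ȳ² > w̄·z̄ (so (x̄, ȳ, w̄, z̄) ∉ C). Set n₀ := √((2x̄)² + (2ȳ)² + (w̄ − z̄)²). Then the linear inequality 4x̄·x + 4ȳ·y + ((w̄ − z̄) − n₀)·w + (−(w̄ − z̄) − n₀)·z ≤ 0 is valid for C, i.e., it holds for every (x, y, w, z) ∈ C. -/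
/-- validity of the rotated-cone cut. For a point `(x̄, ȳ, w̄, z̄)` with
`w̄, z̄ ≥ 0`, `w̄ + z̄ > 0`, `x̄² + ȳ² > w̄·z̄`, and `n₀ = √((2x̄)² + (2ȳ)² + (w̄ − z̄)²)`,
the linear inequality `4x̄x + 4ȳy + ((w̄−z̄) − n₀)w + (−(w̄−z̄) − n₀)z ≤ 0` holds for every
`(x, y, w, z)` in the rotated cone `{w, z ≥ 0, x² + y² ≤ wz}`. -/
theorem rotated_cone_cut_valid (xb yb wb zb : ℝ)
    (hwb : 0 ≤ wb) (hzb : 0 ≤ zb) (hpos : 0 < wb + zb)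
    (hout : xb ^ 2 + yb ^ 2 > wb * zb) :
    ∀ x y w z : ℝ, 0 ≤ w → 0 ≤ z → x ^ 2 + y ^ 2 ≤ w * z →
      4 * xb * x + 4 * yb * y +
        ((wb - zb) - Real.sqrt ((2 * xb) ^ 2 + (2 * yb) ^ 2 + (wb - zb) ^ 2)) * w +
        (-(wb - zb) - Real.sqrt ((2 * xb) ^ 2 + (2 * yb) ^ 2 + (wb - zb) ^ 2)) * z ≤ 0 := by
  intro x y w z hw hz hcone
  set n := Real.sqrt ((2 * xb) ^ 2 + (2 * yb) ^ 2 + (wb - zb) ^ 2) with hn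
  have hA : 0 ≤ (2 * xb) ^ 2 + (2 * yb) ^ 2 + (wb - zb) ^ 2 := by positivity
  have hn2 : n ^ 2 = (2 * xb) ^ 2 + (2 * yb) ^ 2 + (wb - zb) ^ 2 := Real.sq_sqrt hA
  have hn0 : 0 ≤ n := Real.sqrt_nonneg _
  set s := Real.sqrt ((2 * x) ^ 2 + (2 * y) ^ 2 + (w - z) ^ 2) with hs
  have hB : 0 ≤ (2 * x) ^ 2 + (2 * y) ^ 2 + (w - z) ^ 2 := by positivity
  have hs2 : s ^ 2 = (2 * x) ^ 2 + (2 * y) ^ 2 + (w - z) ^ 2 := Real.sq_sqrt hB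
  have hs0 : 0 ≤ s := Real.sqrt_nonneg _
  have hsle : s ≤ w + z := by
    rw [hs]
    have : (2 * x) ^ 2 + (2 * y) ^ 2 + (w - z) ^ 2 ≤ (w + z) ^ 2 := by nlinarith
    calc Real.sqrt ((2 * x) ^ 2 + (2 * y) ^ 2 + (w - z) ^ 2)
        ≤ Real.sqrt ((w + z) ^ 2) := Real.sqrt_le_sqrt this
      _ = w + z := Real.sqrt_sq (by linarith)
  have hcs : 4 * xb * x + 4 * yb * y + (wb - zb) * (w - z) ≤ n * s := by
    nlinarith [sq_nonneg (2 * xb * (2 * y) - 2 * yb * (2 * x)),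
      sq_nonneg (2 * xb * (w - z) - (wb - zb) * (2 * x)),
      sq_nonneg (2 * yb * (w - z) - (wb - zb) * (2 * y)),
      sq_nonneg (n * s - (4 * xb * x + 4 * yb * y + (wb - zb) * (w - z))),
      mul_nonneg hn0 hs0]
  nlinarith [mul_le_mul_of_nonneg_left hsle hn0]
end

section
/- Let C := {(x, y, w, z) ∈ ℝ² × ℝ²₊ : x² + y² ≤ w·z} and let (x̄, ȳ, w̄, z̄) ∈ ℝ⁴ with w̄ ≥ 0, z̄ ≥ 0, w̄ + z̄ > 0 and x̄² + ȳ² > w̄·z̄. Set n₀ := √((2x̄)² + (2ȳ)² + (w̄ − z̄)²). Then the point (x̄, ȳ, w̄, z̄) violates the linear inequality 4x̄·x + 4ȳ·y + ((w̄ − z̄) − n₀)·w + (−(w̄ − z̄) − n₀)·z ≤ 0; specifically, evaluating the left-hand side at (x̄, ȳ, w̄, z̄) gives n₀·(n₀ − (w̄ + z̄)) > 0. -/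
/-- the rotated-cone cut is violated by the point generating it. For
`(x̄, ȳ, w̄, z̄)` with `w̄, z̄ ≥ 0`, `w̄ + z̄ > 0`, `x̄² + ȳ² > w̄·z̄`, and
`n₀ = √((2x̄)² + (2ȳ)² + (w̄ − z̄)²)`, the left-hand side of the cut evaluated at
`(x̄, ȳ, w̄, z̄)` equals `n₀·(n₀ − (w̄ + z̄))`, which is strictly positive. -/
theorem rotated_cone_cut_violated (xb yb wb zb : ℝ)
    (hwb : 0 ≤ wb) (hzb : 0 ≤ zb) (hpos : 0 < wb + zb)
    (hout : xb ^ 2 + yb ^ 2 > wb * zb) :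
    let n0 : ℝ := Real.sqrt ((2 * xb) ^ 2 + (2 * yb) ^ 2 + (wb - zb) ^ 2)
    4 * xb * xb + 4 * yb * yb + ((wb - zb) - n0) * wb + (-(wb - zb) - n0) * zb =
      n0 * (n0 - (wb + zb)) ∧
    0 < n0 * (n0 - (wb + zb)) := by
  intro n0
  have hnn : 0 ≤ (2 * xb) ^ 2 + (2 * yb) ^ 2 + (wb - zb) ^ 2 := by positivity
  have hsq : n0 ^ 2 = (2 * xb) ^ 2 + (2 * yb) ^ 2 + (wb - zb) ^ 2 :=
    Real.sq_sqrt hnn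
  have hgt : wb + zb < n0 := by
    have h1 : (wb + zb) ^ 2 < n0 ^ 2 := by
      rw [hsq]; nlinarith
    nlinarith [Real.sqrt_nonneg ((2 * xb) ^ 2 + (2 * yb) ^ 2 + (wb - zb) ^ 2)]
  constructor
  · nlinarith
  · have : 0 < n0 := lt_of_le_of_lt hpos.le hgt
    nlinarith
end

section
/- Let g, b, g_sh, b_sh, σ ∈ ℝ and τ ∈ ℝ with τ > 0, and set y := g + i·b and y_sh := g_sh + i·b_sh (complex numbers). For complex voltages V_k, V_m ∈ ℂ define the branch current I_km := (y/τ)·((1/τ)·V_k − e^{iσ}·V_m) + V_k·y_sh/(2τ²), and define v_k := |V_k|², v_m := |V_m|², c := Re(V_k · conj(V_m)), s := Im(V_k · conj(V_m)). Then |I_km|² = α·v_k + β·v_m + γ·c + ζ·s, where α := (1/τ⁴)·((g² + b²) + (g·g_sh + b·b_sh) + (g_sh² + b_sh²)/4), β := (g² + b²)/τ², γ := (1/τ³)·(cos σ·(−2(g² + b²) − (g·g_sh + b·b_sh)) + sin σ·(b·g_sh − g·b_sh)), and ζ := (1/τ³)·(sin σ·(−2(g² + b²) − (g·g_sh + b·b_sh))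 − cos σ·(b·g_sh − g·b_sh)). -/
open Complex

/-! The current is linear in the voltages, `I_km = A V_k + B V_m` with `A = (y + y_sh/2)/τ²`
and `B = -y e^{iσ}/τ`, so `|I_km|² = |A|² v_k + |B|² v_m + 2 Re(A conj(B) V_k conj(V_m))`;
expanding the last term in real and imaginary parts gives the coefficients of `c` and `s`. -/

open ComplexConjugate

theorem Complex.sq_norm_mul_add_mul (a b z w : ℂ) :
    ‖a * z + b * w‖ ^ 2 = ‖a‖ ^ 2 * ‖z‖ ^ 2 + ‖b‖ ^ 2 * ‖w‖ ^ 2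
      + 2 * (a * conj b).re * (z * conj w).re - 2 * (a * conj b).im * (z * conj w).im := by
  have hcross : a * z * conj (b * w) = a * conj b * (z * conj w) := by rw [map_mul]; ring
  rw [Complex.sq_norm, normSq_add, hcross, normSq_mul, normSq_mul, mul_re]
  simp only [← Complex.sq_norm]
  ring

section BranchCoefficients

variable (g b gsh bsh σ τ : ℝ)

theorem branchCurrent_eq_linear (y ysh Vk Vm : ℂ) :
    (y / τ) * ((1 / τ) * Vk - exp (I * σ) * Vm) + Vk * ysh / (2 * (τ : ℂ) ^ 2)
      = ((τ⁻¹ ^ 2 : ℝ) : ℂ) * (y + ysh / 2) * Vk + ((-τ⁻¹ : ℝ) : ℂ) * (y * exp (σ * I)) * Vm := by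
  rw [mul_comm I]
  push_cast
  ring

theorem sq_norm_coeff_Vk :
    ‖((τ⁻¹ ^ 2 : ℝ) : ℂ) * (((g : ℂ) + I * b) + ((gsh : ℂ) + I * bsh) / 2)‖ ^ 2
      = τ⁻¹ ^ 4 * ((g ^ 2 + b ^ 2) + (g * gsh + b * bsh) + (gsh ^ 2 + bsh ^ 2) / 4) := by
  simp only [Complex.sq_norm, normSq_apply, mul_re, mul_im, add_re, add_im, ofReal_re, ofReal_im,
    I_re, I_im, div_ofNat_re, div_ofNat_im]
  ring

theorem sq_norm_coeff_Vm :
    ‖((-τ⁻¹ : ℝ) : ℂ) * (((g : ℂ) + I * b) * exp (σ * I))‖ ^ 2 = τ⁻¹ ^ 2 * (g ^ 2 + b ^ 2) := by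
  simp only [Complex.sq_norm, normSq_apply, mul_re, mul_im, add_re, add_im, ofReal_re, ofReal_im,
    I_re, I_im, exp_ofReal_mul_I_re, exp_ofReal_mul_I_im]
  linear_combination (τ⁻¹ ^ 2 * (g ^ 2 + b ^ 2)) * Real.sin_sq_add_cos_sq σ

theorem coeff_Vk_mul_conj_coeff_Vm :
    ((τ⁻¹ ^ 2 : ℝ) : ℂ) * (((g : ℂ) + I * b) + ((gsh : ℂ) + I * bsh) / 2)
        * conj (((-τ⁻¹ : ℝ) : ℂ) * (((g : ℂ) + I * b) * exp (σ * I)))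
      = ⟨-τ⁻¹ ^ 3 * (Real.cos σ * (g ^ 2 + b ^ 2 + (g * gsh + b * bsh) / 2)
            + Real.sin σ * (g * bsh - b * gsh) / 2),
          -τ⁻¹ ^ 3 * (Real.cos σ * (g * bsh - b * gsh) / 2
            - Real.sin σ * (g ^ 2 + b ^ 2 + (g * gsh + b * bsh) / 2))⟩ := by
  apply Complex.ext <;>
  · simp only [conj_re, conj_im, mul_re, mul_im, add_re, add_im, ofReal_re,
      ofReal_im, I_re, I_im, div_ofNat_re, div_ofNat_im, exp_ofReal_mul_I_re, exp_ofReal_mul_I_im]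
    ring

end BranchCoefficients

theorem i2_linear_definition_general (g b gsh bsh σ τ : ℝ)
    (Vk Vm : ℂ) :
    let y : ℂ := (g : ℂ) + Complex.I * (b : ℂ)
    let ysh : ℂ := (gsh : ℂ) + Complex.I * (bsh : ℂ)
    let Ikm : ℂ := (y / (τ : ℂ)) * ((1 / (τ : ℂ)) * Vk - Complex.exp (Complex.I * (σ : ℂ)) * Vm)
      + Vk * ysh / (2 * (τ : ℂ) ^ 2)
    let vk : ℝ := ‖Vk‖ ^ 2
    let vm : ℝ := ‖Vm‖ ^ 2
    let c : ℝ := (Vk * (starRingEnd ℂ) Vm).re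
    let s : ℝ := (Vk * (starRingEnd ℂ) Vm).im
    let α : ℝ := (1 / τ ^ 4) * ((g ^ 2 + b ^ 2) + (g * gsh + b * bsh) + (gsh ^ 2 + bsh ^ 2) / 4)
    let β : ℝ := (g ^ 2 + b ^ 2) / τ ^ 2
    let γ : ℝ := (1 / τ ^ 3) *
      (Real.cos σ * (-2 * (g ^ 2 + b ^ 2) - (g * gsh + b * bsh)) +
        Real.sin σ * (b * gsh - g * bsh))
    let ζ : ℝ := (1 / τ ^ 3) *
      (Real.sin σ * (-2 * (g ^ 2 + b ^ 2) - (g * gsh + b * bsh)) -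
        Real.cos σ * (b * gsh - g * bsh))
    ‖Ikm‖ ^ 2 = α * vk + β * vm + γ * c + ζ * s := by
  dsimp only
  rw [branchCurrent_eq_linear, Complex.sq_norm_mul_add_mul, sq_norm_coeff_Vk, sq_norm_coeff_Vm,
    coeff_Vk_mul_conj_coeff_Vm]
  ring

/-- the squared magnitude of the branch current
`I_km = (y/τ)((1/τ)V_k − e^{iσ}V_m) + V_k·y_sh/(2τ²)` is the linear function
`α v_k + β v_m + γ c + ζ s` of the variables `v_k = |V_k|²`, `v_m = |V_m|²`,
`c = Re(V_k conj(V_m))`, `s = Im(V_k conj(V_m))`. -/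
theorem i2_linear_definition (g b gsh bsh σ τ : ℝ) (hτ : 0 < τ)
    (Vk Vm : ℂ) :
    let y : ℂ := (g : ℂ) + Complex.I * (b : ℂ)
    let ysh : ℂ := (gsh : ℂ) + Complex.I * (bsh : ℂ)
    let Ikm : ℂ := (y / (τ : ℂ)) * ((1 / (τ : ℂ)) * Vk - Complex.exp (Complex.I * (σ : ℂ)) * Vm)
      + Vk * ysh / (2 * (τ : ℂ) ^ 2)
    let vk : ℝ := ‖Vk‖ ^ 2
    let vm : ℝ := ‖Vm‖ ^ 2
    let c : ℝ := (Vk * (starRingEnd ℂ) Vm).re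
    let s : ℝ := (Vk * (starRingEnd ℂ) Vm).im
    let α : ℝ := (1 / τ ^ 4) * ((g ^ 2 + b ^ 2) + (g * gsh + b * bsh) + (gsh ^ 2 + bsh ^ 2) / 4)
    let β : ℝ := (g ^ 2 + b ^ 2) / τ ^ 2
    let γ : ℝ := (1 / τ ^ 3) *
      (Real.cos σ * (-2 * (g ^ 2 + b ^ 2) - (g * gsh + b * bsh)) +
        Real.sin σ * (b * gsh - g * bsh))
    let ζ : ℝ := (1 / τ ^ 3) *
      (Real.sin σ * (-2 * (g ^ 2 + b ^ 2) - (g * gsh + b * bsh)) -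
        Real.cos σ * (b * gsh - g * bsh))
    ‖Ikm‖ ^ 2 = α * vk + β * vm + γ * c + ζ * s :=
  i2_linear_definition_general g b gsh bsh σ τ Vk Vm
end
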